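/- Let A, B, C ⊆ V be nonempty subsets of a multigraph G with A ∩ B = ∅, and let k, ℓ ∈ ℕ. Then there exists a family 𝒳 of subsets of C with |𝒳| ≤ 2^{3(k+ℓ)} such that for every minimal (A,B)-cut (V1, V2) of cut-size at most k with |C ∩ V1| ≤ ℓ, the set C ∩ V1 belongs to 𝒳. -/

import Mathlib

open Finset

variable {V : Type*} [Fintype V] [DecidableEq V]

/-- Cut-size of the cut `(V1, V ∖ V1)`. -/
def cutSize (w : V → V → ℕ) (V1 : Finset V) : ℕ :=
  ∑ u ∈ V1, ∑ v ∈ V1ᶜ, w u v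

/-- Boundary `δ(X)`: unordered pairs `{u,v}` with `u ∈ X`, `v ∉ X`, `w u v > 0`. -/
def bdry (w : V → V → ℕ) (X : Finset V) : Set (Sym2 V) :=
  {e | ∃ u v, e = s(u, v) ∧ u ∈ X ∧ v ∉ X ∧ 0 < w u v}

/-- `(A,B)`-cut, represented by its first part `V1` (the second part is `V1ᶜ`). -/
def IsCut (A B V1 : Finset V) : Prop := A ⊆ V1 ∧ B ⊆ V1ᶜ

/-- Minimal `(A,B)`-cut. -/
def IsMinimalCut (w : V → V → ℕ) (A B V1 : Finset V) : Prop :=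
  IsCut A B V1 ∧
  (¬ ∃ V1' : Finset V, A ⊆ V1' ∧ V1' ⊂ V1 ∧ bdry w V1' ⊆ bdry w V1) ∧
  (¬ ∃ V2' : Finset V, B ⊆ V2' ∧ V2' ⊂ V1ᶜ ∧ bdry w V2' ⊆ bdry w V1)

/-- Minimum `(A,B)`-cut. -/
def IsMinCut (w : V → V → ℕ) (A B V1 : Finset V) : Prop :=
  IsCut A B V1 ∧ ∀ U : Finset V, IsCut A B U → cutSize w V1 ≤ cutSize w U

/-- MM `(A,B)`-cut: minimum cut with `|V1|` maximum among minimum cuts. -/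
def IsMMCut (w : V → V → ℕ) (A B V1 : Finset V) : Prop :=
  IsMinCut w A B V1 ∧ ∀ U : Finset V, IsMinCut w A B U → U.card ≤ V1.card

/-- Important `(A,B)`-cut. -/
def IsImportantCut (w : V → V → ℕ) (A B V1 : Finset V) : Prop :=
  IsMinimalCut w A B V1 ∧
  ¬ ∃ X' : Finset V, IsCut A B X' ∧ V1 ⊂ X' ∧ cutSize w X' ≤ cutSize w V1

/-- Degree of a vertex. -/
def deg (w : V → V → ℕ) (v : V) : ℕ := ∑ u, w v u

/-- `deg(v; X)`: degree of `v` towards `X ∖ {v}`. -/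
def degIn (w : V → V → ℕ) (v : V) (X : Finset V) : ℕ :=
  ∑ u ∈ X.erase v, w v u

/-- Neighborhood `N(X)`. -/
def nbhd (w : V → V → ℕ) (X : Finset V) : Finset V :=
  Finset.univ.filter (fun u => u ∉ X ∧ ∃ x ∈ X, 0 < w u x)

/-- Feasible `(A,B)`-cut for the bounded-degree cut instance `(G,A,B,uA,uB,k)`. -/
def FeasibleCut (w : V → V → ℕ) (uA uB : V → ℕ) (k : ℕ) (A B VA : Finset V) : Prop :=
  IsMinimalCut w A B VA ∧ cutSize w VA ≤ k ∧
  (∀ v ∈ VA, degIn w v VA ≤ uA v) ∧ (∀ v ∈ VAᶜ, degIn w v VAᶜ ≤ uB v)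

/-- Feasibility of the instance `(G,A,B,uA,uB,k)`. -/
def Feasible (w : V → V → ℕ) (uA uB : V → ℕ) (k : ℕ) (A B : Finset V) : Prop :=
  ∃ VA : Finset V, FeasibleCut w uA uB k A B VA

/-- Unsatisfied vertices w.r.t. an upper-bound function `u` : `{v : deg(v) > u v}`. -/
def unsat (w : V → V → ℕ) (u : V → ℕ) : Finset V :=
  Finset.univ.filter (fun v => u v < deg w v)

/-- Easy instance. -/
def EasyInstance (w : V → V → ℕ) (uA uB : V → ℕ) (A B : Finset V) : Prop :=
  unsat w uA ∪ unsat w uB ⊆ A ∪ B ∧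
  nbhd w (unsat w uA ∩ A) ⊆ A ∪ B ∧
  nbhd w (unsat w uB ∩ B) ⊆ A ∪ B

/-- `A_π` for the cut `π = (V1, V1ᶜ)`. -/
def Api (w : V → V → ℕ) (uA uB : V → ℕ) (A V1 : Finset V) : Finset V :=
  A ∪ (unsat w uA ∩ V1) ∪ (unsat w uB ∩ V1) ∪
    (nbhd w (unsat w uA ∩ V1) ∩ V1) ∪ (nbhd w (unsat w uB ∩ V1ᶜ) ∩ V1)

/-- `B_π` for the cut `π = (V1, V1ᶜ)`. -/
def Bpi (w : V → V → ℕ) (uA uB : V → ℕ) (B V1 : Finset V) : Finset V :=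
  B ∪ (unsat w uA ∩ V1ᶜ) ∪ (unsat w uB ∩ V1ᶜ) ∪
    (nbhd w (unsat w uA ∩ V1) ∩ V1ᶜ) ∪ (nbhd w (unsat w uB ∩ V1ᶜ) ∩ V1ᶜ)

/-!
Add an edge from every vertex of `C` to a fixed `b ∈ B`: this raises the size of a cut `V1` by
`|C ∩ V1|`, so a minimal cut as in the statement becomes a cut of size at most `k + ℓ`. Minimal
cuts are grounded (every vertex of `V1` is reachable from `A` inside `V1`), and the grounded cuts
of size at most `κ` all lie inside members of a family of at most `2 ^ (2κ - λ)` cuts of size at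
most `κ`, where `λ` is the minimum cut size: branch on an edge `uv` leaving the largest grounded
minimum cut `R`, either moving `v` to the source side (`λ` grows) or deleting `uv` (`κ` drops by
`w u v`, and `λ` by at most as much). With `κ = k + ℓ` every member `W` has `|C ∩ W| ≤ k + ℓ`,
and the subsets of the sets `C ∩ W` are the candidates.
-/
section Reachability

variable {α : Type*} {w w' : α → α → ℕ} {A A' R U U' : Finset α} {a u v x y : α}

def ReachIn (w : α → α → ℕ) (U : Finset α) : α → α → Prop :=
  Relation.ReflTransGen fun x y => x ∈ U ∧ y ∈ U ∧ 0 < w x y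

def IsGrounded (w : α → α → ℕ) (A U : Finset α) : Prop :=
  ∀ x ∈ U, ∃ a ∈ A, ReachIn w U a x

open Classical in
noncomputable def reachClosure (w : α → α → ℕ) (A U : Finset α) : Finset α :=
  {x ∈ U | ∃ a ∈ A, ReachIn w U a x}

theorem ReachIn.mono (hU : U ⊆ U') (hw : ∀ x ∈ U, ∀ y ∈ U, 0 < w x y → 0 < w' x y)
    (h : ReachIn w U a x) : ReachIn w' U' a x :=
  Relation.ReflTransGen.mono (fun x y ⟨hx, hy, hxy⟩ => ⟨hU hx, hU hy, hw x hx y hy hxy⟩) _ _ h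

theorem IsGrounded.mono_weight (h : IsGrounded w A U)
    (hw : ∀ x ∈ U, ∀ y ∈ U, 0 < w x y → 0 < w' x y) : IsGrounded w' A U := fun x hx =>
  let ⟨a, ha, hax⟩ := h x hx
  ⟨a, ha, hax.mono subset_rfl hw⟩

theorem IsGrounded.mono_left (h : IsGrounded w A U) (hA : A ⊆ A') : IsGrounded w A' U :=
  fun x hx => let ⟨a, ha, hax⟩ := h x hx; ⟨a, hA ha, hax⟩

theorem IsGrounded.subset_of_forall_eq_zero (h : IsGrounded w A U) (hAR : A ⊆ R)
    (hR : ∀ x ∈ R, ∀ y ∉ R, w x y = 0) : U ⊆ R := by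
  intro x hx
  obtain ⟨a, ha, hax⟩ := h x hx
  induction hax with
  | refl => exact hAR ha
  | tail _ hyz ih =>
    by_contra hz
    exact (hR _ (ih hyz.1) _ hz ▸ hyz.2.2).false

theorem mem_reachClosure : x ∈ reachClosure w A U ↔ x ∈ U ∧ ∃ a ∈ A, ReachIn w U a x := by
  simp [reachClosure]

theorem reachClosure_subset : reachClosure w A U ⊆ U := fun _ hx => (mem_reachClosure.1 hx).1

theorem subset_reachClosure (hA : A ⊆ U) : A ⊆ reachClosure w A U := fun a ha =>
  mem_reachClosure.2 ⟨hA ha, a, ha, .refl⟩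

theorem mem_reachClosure_of_adj (hx : x ∈ reachClosure w A U) (hy : y ∈ U) (hxy : 0 < w x y) :
    y ∈ reachClosure w A U :=
  let ⟨hxU, a, ha, hax⟩ := mem_reachClosure.1 hx
  mem_reachClosure.2 ⟨hy, a, ha, hax.tail ⟨hxU, hy, hxy⟩⟩

theorem IsGrounded.subset_reachClosure (h : IsGrounded w A U) (hU : U ⊆ U') :
    U ⊆ reachClosure w A U' := fun x hx =>
  let ⟨a, ha, hax⟩ := h x hx
  mem_reachClosure.2 ⟨hU hx, a, ha, hax.mono hU fun _ _ _ _ => id⟩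

theorem isGrounded_reachClosure : IsGrounded w A (reachClosure w A U) := by
  intro x hx
  obtain ⟨-, a, ha, hax⟩ := mem_reachClosure.1 hx
  refine ⟨a, ha, ?_⟩
  induction hax with
  | refl => exact .refl
  | @tail y z hay hyz ih =>
    have hy : y ∈ reachClosure w A U := mem_reachClosure.2 ⟨hyz.1, a, ha, hay⟩
    exact (ih hy).tail ⟨hy, mem_reachClosure_of_adj hy hyz.2.1 hyz.2.2, hyz.2.2⟩

variable [DecidableEq α]

def eraseEdge (w : α → α → ℕ) (u v : α) : α → α → ℕ :=
  fun x y => if x = u ∧ y = v then 0 else w x y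

theorem IsGrounded.eraseEdge (h : IsGrounded w A U) (hv : v ∉ U) :
    IsGrounded (eraseEdge w u v) A U :=
  h.mono_weight fun x _ y hy hxy => by
    rwa [_root_.eraseEdge, if_neg fun ⟨_, hyv⟩ => hv (hyv ▸ hy)]

end Reachability

section CutSize

variable {w : V → V → ℕ} {A C U X : Finset V} {b u v : V}

theorem cutSize_eq_sum_ite (w : V → V → ℕ) (X : Finset V) :
    cutSize w X = ∑ x, ∑ y, if x ∈ X ∧ y ∉ X then w x y else 0 := by
  simp [cutSize, ite_and, sum_ite_mem, sum_ite, filter_not, compl_eq_univ_sdiff]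

theorem cutSize_union_add_cutSize_inter_le (w : V → V → ℕ) (X Y : Finset V) :
    cutSize w (X ∪ Y) + cutSize w (X ∩ Y) ≤ cutSize w X + cutSize w Y := by
  simp only [cutSize_eq_sum_ite, ← sum_add_distrib]
  refine sum_le_sum fun x _ => sum_le_sum fun y _ => ?_
  by_cases x ∈ X <;> by_cases x ∈ Y <;> by_cases y ∈ X <;> by_cases y ∈ Y <;> simp [*]

theorem le_cutSize (hu : u ∈ X) (hv : v ∉ X) : w u v ≤ cutSize w X :=
  calc w u v ≤ ∑ y ∈ Xᶜ, w u y := single_le_sum (fun _ _ => Nat.zero_le _) (mem_compl.2 hv)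
    _ ≤ cutSize w X := single_le_sum (f := fun x => ∑ y ∈ Xᶜ, w x y) (fun _ _ => Nat.zero_le _) hu

theorem cutSize_le_of_subset (hXU : X ⊆ U) (h : ∀ x ∈ X, ∀ y ∈ U \ X, w x y = 0) :
    cutSize w X ≤ cutSize w U :=
  calc cutSize w X = ∑ x ∈ X, ∑ y ∈ Uᶜ, w x y := sum_congr rfl fun x hx =>
        (sum_subset (compl_subset_compl.2 hXU) fun y hy hyU =>
          h x hx y (by simp_all)).symm
    _ ≤ cutSize w U := sum_le_sum_of_subset hXU

theorem cutSize_reachClosure_le : cutSize w (reachClosure w A U) ≤ cutSize w U :=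
  cutSize_le_of_subset reachClosure_subset fun _ hx y hy => by
    by_contra h
    exact (mem_sdiff.1 hy).2 (mem_reachClosure_of_adj hx (mem_sdiff.1 hy).1 (Nat.pos_of_ne_zero h))

theorem cutSize_add (w w' : V → V → ℕ) (X : Finset V) :
    cutSize (w + w') X = cutSize w X + cutSize w' X := by
  simp [cutSize, sum_add_distrib]

theorem cutSize_eraseEdge (w : V → V → ℕ) (u v : V) (X : Finset V) :
    cutSize w X = cutSize (eraseEdge w u v) X + if u ∈ X ∧ v ∉ X then w u v else 0 := by
  have hw : w = eraseEdge w u v + fun x y => if x = u ∧ y = v then w u v else 0 := by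
    ext x y
    by_cases h : x = u ∧ y = v <;> simp [eraseEdge, h]
  conv_lhs => rw [hw, cutSize_add]
  simp [cutSize, ite_and]

theorem cutSize_eraseEdge_of_mem (hu : u ∈ X) (hv : v ∉ X) :
    cutSize w X = cutSize (eraseEdge w u v) X + w u v := by
  rw [cutSize_eraseEdge w u v X, if_pos ⟨hu, hv⟩]

theorem cutSize_le_cutSize_eraseEdge_add (w : V → V → ℕ) (u v : V) (X : Finset V) :
    cutSize w X ≤ cutSize (eraseEdge w u v) X + w u v := by
  rw [cutSize_eraseEdge w u v X]
  split_ifs <;> omega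

def edgesTo (C : Finset V) (b : V) : V → V → ℕ := fun x y => if x ∈ C ∧ y = b then 1 else 0

theorem cutSize_edgesTo (hb : b ∉ X) : cutSize (edgesTo C b) X = #(C ∩ X) := by
  simp [cutSize, edgesTo, ite_and, hb, inter_comm]

end CutSize

section Cuts

variable {w : V → V → ℕ} {A B R U : Finset V} {u v : V}

theorem IsMinimalCut.isGrounded (h : IsMinimalCut w A B U) : IsGrounded w A U := by
  obtain ⟨⟨hAU, -⟩, hmin, -⟩ := h
  intro x hx
  by_contra hxA
  refine hmin ⟨reachClosure w A U, subset_reachClosure hAU,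
    ssubset_iff_of_subset reachClosure_subset |>.2 ⟨x, hx, fun hx' => hxA ?_⟩, ?_⟩
  · exact (mem_reachClosure.1 hx').2
  · rintro _ ⟨p, q, rfl, hp, hq, hpq⟩
    exact ⟨p, q, rfl, reachClosure_subset hp,
      fun hqU => hq (mem_reachClosure_of_adj hp hqU hpq), hpq⟩

theorem isCut_reachClosure (h : IsCut A B U) : IsCut A B (reachClosure w A U) :=
  ⟨subset_reachClosure h.1, h.2.trans (compl_subset_compl.2 reachClosure_subset)⟩

theorem isMinCut_reachClosure (h : IsMinCut w A B U) : IsMinCut w A B (reachClosure w A U) :=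
  ⟨isCut_reachClosure h.1, fun U' hU' => cutSize_reachClosure_le.trans (h.2 U' hU')⟩

/-- A largest grounded minimum cut plays the role of the furthest minimum cut. -/
theorem exists_isMinCut_isGrounded_max_card (w : V → V → ℕ) (h : ∃ U, IsCut A B U) :
    ∃ R, IsMinCut w A B R ∧ IsGrounded w A R ∧
      ∀ U, IsMinCut w A B U → IsGrounded w A U → #U ≤ #R := by
  classical
  obtain ⟨U, hU⟩ := h
  obtain ⟨U₀, hU₀, hU₀min⟩ := exists_min_image {U | IsCut A B U} (cutSize w) ⟨U, by simpa⟩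
  have hU₀cut : IsMinCut w A B U₀ := ⟨by simpa using hU₀, fun U hU => hU₀min U (by simpa)⟩
  obtain ⟨R, hR, hRmax⟩ := exists_max_image {U | IsMinCut w A B U ∧ IsGrounded w A U} card
    ⟨_, by simpa using ⟨isMinCut_reachClosure hU₀cut, isGrounded_reachClosure⟩⟩
  simp only [mem_filter, mem_univ, true_and] at hR hRmax
  exact ⟨R, hR.1, hR.2, fun U hU hUg => hRmax U ⟨hU, hUg⟩⟩

theorem exists_grounded_cut_superset (hR : IsMinCut w A B R) (hRg : IsGrounded w A R)
    (hU : IsCut A B U) (hUg : IsGrounded w A U) :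
    ∃ U', U ⊆ U' ∧ R ⊆ U' ∧ IsCut A B U' ∧ IsGrounded w A U' ∧ cutSize w U' ≤ cutSize w U := by
  have hunion : IsCut A B (U ∪ R) :=
    ⟨hU.1.trans subset_union_left, by rw [compl_union]; exact subset_inter hU.2 hR.1.2⟩
  have hinter : IsCut A B (U ∩ R) :=
    ⟨subset_inter hU.1 hR.1.1, hU.2.trans (compl_subset_compl.2 inter_subset_left)⟩
  refine ⟨reachClosure w A (U ∪ R), hUg.subset_reachClosure subset_union_left,
    hRg.subset_reachClosure subset_union_right, isCut_reachClosure hunion,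
    isGrounded_reachClosure, ?_⟩
  have := cutSize_union_add_cutSize_inter_le w U R
  have := hR.2 _ hinter
  have := cutSize_reachClosure_le (w := w) (A := A) (U := U ∪ R)
  omega

theorem cutSize_lt_of_isCut_insert (hR : IsMinCut w A B R) (hRg : IsGrounded w A R)
    (hRmax : ∀ U, IsMinCut w A B U → IsGrounded w A U → #U ≤ #R)
    (hu : u ∈ R) (hv : v ∉ R) (huv : 0 < w u v) (hU : IsCut (insert v R) B U) :
    cutSize w R < cutSize w U := by
  by_contra! hle
  have hUmin : IsMinCut w A B U :=
    ⟨⟨hR.1.1.trans ((subset_insert v R).trans hU.1), hU.2⟩, fun U' hU' => hle.trans (hR.2 U' hU')⟩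
  have hRcl : R ⊆ reachClosure w A U := hRg.subset_reachClosure ((subset_insert v R).trans hU.1)
  have hvcl : v ∈ reachClosure w A U :=
    mem_reachClosure_of_adj (hRcl hu) (hU.1 (mem_insert_self v R)) huv
  have := hRmax _ (isMinCut_reachClosure hUmin) isGrounded_reachClosure
  have := card_lt_card (ssubset_insert hv)
  have := card_le_card (insert_subset hvcl hRcl)
  omega

end Cuts

section Covering

variable {w : V → V → ℕ} {κ : ℕ} {A B R : Finset V} {𝒲₁ 𝒲₂ : Finset (Finset V)} {u v : V}

def Covers (w : V → V → ℕ) (κ : ℕ) (A B : Finset V) (𝒲 : Finset (Finset V)) : Prop :=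
  (∀ W ∈ 𝒲, IsCut A B W ∧ cutSize w W ≤ κ) ∧
    ∀ U, IsCut A B U → IsGrounded w A U → cutSize w U ≤ κ → ∃ W ∈ 𝒲, U ⊆ W

theorem covers_empty (h : ∀ U, IsCut A B U → κ < cutSize w U) : Covers w κ A B ∅ :=
  ⟨by simp, fun U hU _ hUκ => absurd hUκ (h U hU).not_ge⟩

theorem covers_singleton (hR : IsCut A B R) (hRκ : cutSize w R ≤ κ)
    (hclosed : ∀ x ∈ R, ∀ y ∉ R, w x y = 0) : Covers w κ A B {R} :=
  ⟨by simpa using ⟨hR, hRκ⟩, fun _ _ hUg _ =>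
    ⟨R, mem_singleton_self R, hUg.subset_of_forall_eq_zero hR.1 hclosed⟩⟩

/-- Branching on an edge `uv` leaving the largest grounded minimum cut `R`: after enlarging a cut
to contain `R`, either it contains `v`, or it cuts `uv`. -/
theorem covers_union (hR : IsMinCut w A B R) (hRg : IsGrounded w A R) (hu : u ∈ R)
    (huvκ : w u v ≤ κ) (h₁ : Covers w κ (insert v R) B 𝒲₁)
    (h₂ : Covers (eraseEdge w u v) (κ - w u v) A B 𝒲₂) : Covers w κ A B (𝒲₁ ∪ 𝒲₂) := by
  refine ⟨fun W hW => ?_, fun U hU hUg hUκ => ?_⟩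
  · rcases mem_union.1 hW with hW | hW
    · obtain ⟨hWcut, hWκ⟩ := h₁.1 W hW
      exact ⟨⟨hR.1.1.trans ((subset_insert v R).trans hWcut.1), hWcut.2⟩, hWκ⟩
    · obtain ⟨hWcut, hWκ⟩ := h₂.1 W hW
      have := cutSize_le_cutSize_eraseEdge_add w u v W
      exact ⟨hWcut, by omega⟩
  obtain ⟨U', hUU', hRU', hU'cut, hU'g, hU'U⟩ := exists_grounded_cut_superset hR hRg hU hUg
  suffices ∃ W ∈ 𝒲₁ ∪ 𝒲₂, U' ⊆ W from
    let ⟨W, hW, hU'W⟩ := this; ⟨W, hW, hUU'.trans hU'W⟩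
  by_cases hvU' : v ∈ U'
  · obtain ⟨W, hW, hU'W⟩ := h₁.2 U' ⟨insert_subset hvU' hRU', hU'cut.2⟩
      (hU'g.mono_left (hR.1.1.trans (subset_insert v R))) (by omega)
    exact ⟨W, mem_union_left _ hW, hU'W⟩
  · have := cutSize_eraseEdge_of_mem (w := w) (hRU' hu) hvU'
    obtain ⟨W, hW, hU'W⟩ := h₂.2 U' hU'cut (hU'g.eraseEdge hvU') (by omega)
    exact ⟨W, mem_union_right _ hW, hU'W⟩

/-- The measure `2κ - λ(A,B)` drops in both branches of `covers_union`, which bounds the number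
of leaves of the branching. -/
theorem exists_card_le_covers (n : ℕ) (w : V → V → ℕ) (κ : ℕ) (A B : Finset V)
    (hκ : ∀ U, IsCut A B U → 2 * κ ≤ n + cutSize w U) :
    ∃ 𝒲 : Finset (Finset V), #𝒲 ≤ 2 ^ n ∧ Covers w κ A B 𝒲 := by
  induction n using Nat.strong_induction_on generalizing w κ A B with | _ n ih =>
  by_cases hcut : ∃ U, IsCut A B U ∧ cutSize w U ≤ κ
  swap
  · push Not at hcut
    exact ⟨∅, by simp, covers_empty hcut⟩
  obtain ⟨U, hU, hUκ⟩ := hcut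
  obtain ⟨R, hR, hRg, hRmax⟩ := exists_isMinCut_isGrounded_max_card w ⟨U, hU⟩
  have hRκ : cutSize w R ≤ κ := (hR.2 U hU).trans hUκ
  by_cases hclosed : ∀ x ∈ R, ∀ y ∉ R, w x y = 0
  · exact ⟨{R}, by simp [Nat.one_le_two_pow], covers_singleton hR.1 hRκ hclosed⟩
  push Not at hclosed
  obtain ⟨u, hu, v, hv, huv⟩ := hclosed
  have huvR : w u v ≤ cutSize w R := le_cutSize hu hv
  have hRn := hκ R hR.1
  obtain ⟨m, rfl⟩ : ∃ m, n = m + 1 := ⟨n - 1, by omega⟩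
  obtain ⟨𝒲₁, h𝒲₁, hcov₁⟩ := ih m (by omega) w κ (insert v R) B fun U hU => by
    have := cutSize_lt_of_isCut_insert hR hRg hRmax hu hv (Nat.pos_of_ne_zero huv) hU
    omega
  obtain ⟨𝒲₂, h𝒲₂, hcov₂⟩ := ih m (by omega) (eraseEdge w u v) (κ - w u v) A B fun U hU => by
    have := cutSize_le_cutSize_eraseEdge_add w u v U
    have := hR.2 U hU
    omega
  refine ⟨𝒲₁ ∪ 𝒲₂, ?_, covers_union hR hRg hu (by omega) hcov₁ hcov₂⟩
  calc #(𝒲₁ ∪ 𝒲₂) ≤ #𝒲₁ + #𝒲₂ := card_union_le _ _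
    _ ≤ 2 ^ (m + 1) := by rw [pow_succ]; omega

end Covering

theorem card_biUnion_powerset_le {ι α : Type*} [DecidableEq α] (s : Finset ι) (f : ι → Finset α)
    {t : ℕ} (h : ∀ i ∈ s, #(f i) ≤ t) : #(s.biUnion fun i => (f i).powerset) ≤ #s * 2 ^ t :=
  calc #(s.biUnion fun i => (f i).powerset) ≤ ∑ i ∈ s, #(f i).powerset := card_biUnion_le
    _ ≤ ∑ _i ∈ s, 2 ^ t := sum_le_sum fun i hi => by
        rw [card_powerset]; exact Nat.pow_le_pow_right two_pos (h i hi)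
    _ = #s * 2 ^ t := by rw [sum_const, smul_eq_mul]

theorem candidate_sets_one_general (w : V → V → ℕ) (A B C : Finset V) (hB : B.Nonempty) (k l : ℕ) :
    ∃ 𝒳 : Finset (Finset V), 𝒳.card ≤ 2 ^ (3 * (k + l)) ∧ (∀ X ∈ 𝒳, X ⊆ C) ∧
      ∀ V1 : Finset V, IsMinimalCut w A B V1 → cutSize w V1 ≤ k →
        (C ∩ V1).card ≤ l → C ∩ V1 ∈ 𝒳 := by
  obtain ⟨b, hb⟩ := hB
  have hcutSize : ∀ U, IsCut A B U → cutSize (w + edgesTo C b) U = cutSize w U + #(C ∩ U) :=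
    fun U hU => by rw [cutSize_add, cutSize_edgesTo (mem_compl.1 (hU.2 hb))]
  obtain ⟨𝒲, h𝒲, hcov⟩ :=
    exists_card_le_covers (2 * (k + l)) (w + edgesTo C b) (k + l) A B fun _ _ => by omega
  refine ⟨𝒲.biUnion fun W => (C ∩ W).powerset, ?_, ?_, fun V1 hV1 hk hl => ?_⟩
  · calc #(𝒲.biUnion fun W => (C ∩ W).powerset) ≤ #𝒲 * 2 ^ (k + l) :=
          card_biUnion_powerset_le 𝒲 _ fun W hW => by
            have := hcutSize W (hcov.1 W hW).1
            have := (hcov.1 W hW).2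
            omega
      _ ≤ 2 ^ (2 * (k + l)) * 2 ^ (k + l) := Nat.mul_le_mul_right _ h𝒲
      _ = 2 ^ (3 * (k + l)) := by rw [← pow_add]; ring_nf
  · simp only [mem_biUnion, mem_powerset]
    rintro X ⟨W, -, hXW⟩
    exact hXW.trans inter_subset_left
  · have hV1g : IsGrounded (w + edgesTo C b) A V1 :=
      hV1.isGrounded.mono_weight fun x _ y _ hxy => by simp only [Pi.add_apply]; omega
    obtain ⟨W, hW, hV1W⟩ := hcov.2 V1 hV1.1 hV1g (by rw [hcutSize V1 hV1.1]; omega)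
    exact mem_biUnion.2 ⟨W, hW, mem_powerset.2 (inter_subset_inter_left hV1W)⟩

/-- candidate sets for `C ∩ V1` over minimal `(A,B)`-cuts of size `≤ k`
with `|C ∩ V1| ≤ ℓ`. -/
theorem candidate_sets_one (w : V → V → ℕ)
    (hsymm : ∀ u v, w u v = w v u) (hloop : ∀ v, w v v = 0)
    (A B C : Finset V) (hA : A.Nonempty) (hB : B.Nonempty) (hC : C.Nonempty)
    (hAB : Disjoint A B) (k l : ℕ) :
    ∃ 𝒳 : Finset (Finset V), 𝒳.card ≤ 2 ^ (3 * (k + l)) ∧ (∀ X ∈ 𝒳, X ⊆ C) ∧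
      ∀ V1 : Finset V, IsMinimalCut w A B V1 → cutSize w V1 ≤ k →
        (C ∩ V1).card ≤ l → C ∩ V1 ∈ 𝒳 :=
  candidate_sets_one_general w A B C hB k l
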